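/- arXiv:0809.4887 — 7 statements merged into one kernel-verified Lean document; each statement's English description precedes it below -/
import Mathlib

section
/- Let m be a positive integer, G a subgroup of Perm(Fin m), and N a normal subgroup of 2^{m−1}·G of odd index r. Then N contains the kernel 2^{m−1}·{1} of the projection κ : 2^{m−1}·G → G, and κ(N) is a normal subgroup of index r in G. -/
open Equiv Finset

namespace SignedPerm

variable {m : ℕ}

/-- The sign-flip involution ν on `Fin m × Bool`. -/
def nu (m : ℕ) : Equiv.Perm (Fin m × Bool) where
  toFun p := (p.1, !p.2)
  invFun p := (p.1, !p.2)
  left_inv p := by simp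
  right_inv p := by simp

/-- The signed permutation `(i,b) ↦ (s i, εᵢ · b)`, where `ε i = true` means sign flip. -/
def signedOf (s : Equiv.Perm (Fin m)) (ε : Fin m → Bool) : Equiv.Perm (Fin m × Bool) where
  toFun p := (s p.1, xor (ε p.1) p.2)
  invFun p := (s.symm p.1, xor (ε (s.symm p.1)) p.2)
  left_inv p := by simp [← Bool.xor_assoc]
  right_inv p := by simp [← Bool.xor_assoc]

/-- The sign product `∏ᵢ εᵢ` of a system of signs (`true` = `-1`). -/
def signProd (ε : Fin m → Bool) : ℤˣ := ∏ i, if ε i then -1 else 1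

lemma signedOf_one : signedOf (1 : Equiv.Perm (Fin m)) (fun _ => false) = 1 :=
  Equiv.ext fun p => by simp [signedOf]

lemma signedOf_mul (s t : Equiv.Perm (Fin m)) (ε η : Fin m → Bool) :
    signedOf s ε * signedOf t η = signedOf (s * t) (fun i => xor (ε (t i)) (η i)) :=
  Equiv.ext fun p => by simp [signedOf, Equiv.Perm.mul_apply, Bool.xor_assoc]

lemma signedOf_inv (s : Equiv.Perm (Fin m)) (ε : Fin m → Bool) :
    (signedOf s ε)⁻¹ = signedOf s⁻¹ (fun i => ε (s⁻¹ i)) :=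
  inv_eq_of_mul_eq_one_right <| by
    rw [signedOf_mul]
    simp [signedOf_one]

lemma signProd_const_false : signProd (fun _ : Fin m => false) = 1 := by simp [signProd]

lemma signProd_comp (t : Equiv.Perm (Fin m)) (ε : Fin m → Bool) :
    signProd (fun i => ε (t i)) = signProd ε := by
  simpa [signProd] using Equiv.prod_comp t (fun i => if ε i then (-1 : ℤˣ) else 1)

lemma signProd_xor (ε η : Fin m → Bool) :
    signProd (fun i => xor (ε i) (η i)) = signProd ε * signProd η := by
  rw [signProd, signProd, signProd, ← Finset.prod_mul_distrib]
  refine Finset.prod_congr rfl fun i _ => ?_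
  cases ε i <;> cases η i <;> simp

/-- The group `2^m · G` of all signed permutations with underlying permutation in `G`. -/
def bigSigned (G : Subgroup (Equiv.Perm (Fin m))) : Subgroup (Equiv.Perm (Fin m × Bool)) where
  carrier := {σ | ∃ s ∈ G, ∃ ε : Fin m → Bool, σ = signedOf s ε}
  one_mem' := ⟨1, G.one_mem, fun _ => false, signedOf_one.symm⟩
  mul_mem' := by
    rintro σ τ ⟨s, hs, ε, rfl⟩ ⟨t, ht, η, rfl⟩
    exact ⟨s * t, G.mul_mem hs ht, _, (signedOf_mul s t ε η)⟩
  inv_mem' := by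
    rintro σ ⟨s, hs, ε, rfl⟩
    exact ⟨s⁻¹, G.inv_mem hs, _, signedOf_inv s ε⟩

/-- The group `2^{m-1} · G` of signed permutations with underlying permutation in `G`
and sign product `1`. -/
def evenSigned (G : Subgroup (Equiv.Perm (Fin m))) : Subgroup (Equiv.Perm (Fin m × Bool)) where
  carrier := {σ | ∃ s ∈ G, ∃ ε : Fin m → Bool, σ = signedOf s ε ∧ signProd ε = 1}
  one_mem' := ⟨1, G.one_mem, fun _ => false, signedOf_one.symm, signProd_const_false⟩
  mul_mem' := by
    rintro σ τ ⟨s, hs, ε, rfl, hε⟩ ⟨t, ht, η, rfl, hη⟩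
    refine ⟨s * t, G.mul_mem hs ht, _, signedOf_mul s t ε η, ?_⟩
    rw [signProd_xor (fun i => ε (t i)) η, signProd_comp t ε, hε, hη, one_mul]
  inv_mem' := by
    rintro σ ⟨s, hs, ε, rfl, hε⟩
    exact ⟨s⁻¹, G.inv_mem hs, _, signedOf_inv s ε, by rw [signProd_comp s⁻¹ ε, hε]⟩

end SignedPerm

open SignedPerm in
/-- if `N` is a normal subgroup of `2^{m-1}·G` of odd index `r`, then `N` contains
the kernel `2^{m-1}·{1}` of the projection `κ : 2^{m-1}·G → G`, and `κ(N)` is a normal subgroup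
of index `r` in `G`. -/
theorem statement1 (m : ℕ) (hm : 0 < m) (G : Subgroup (Equiv.Perm (Fin m)))
    (κ : evenSigned G →* G)
    (hκ : ∀ (σ : evenSigned G) (s : Equiv.Perm (Fin m)) (ε : Fin m → Bool),
        (σ : Equiv.Perm (Fin m × Bool)) = signedOf s ε → (κ σ : Equiv.Perm (Fin m)) = s)
    (N : Subgroup (evenSigned G)) (hN : N.Normal) (r : ℕ) (hr : N.index = r)
    (hodd : Odd r) :
    κ.ker ≤ N ∧ (N.map κ).Normal ∧ (N.map κ).index = r := by
  have hsurj : Function.Surjective κ := by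
    intro s
    have hmem : signedOf (s : Equiv.Perm (Fin m)) (fun _ => false) ∈ evenSigned G :=
      ⟨s, s.2, _, rfl, signProd_const_false⟩
    refine ⟨⟨_, hmem⟩, Subtype.ext (hκ ⟨_, hmem⟩ (s : Equiv.Perm (Fin m)) (fun _ => false) rfl)⟩
  have hr0 : r ≠ 0 := by rintro rfl; simp [Nat.odd_iff] at hodd
  have hfin : Nat.card (evenSigned G ⧸ N) = r := by rw [← hr]; rfl
  have hker : κ.ker ≤ N := by
    intro x hx
    obtain ⟨s, hs, ε, hσ, hε⟩ := x.2
    have hs1 : (κ x : Equiv.Perm (Fin m)) = s := hκ x s ε hσ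
    have hx1 : (κ x : Equiv.Perm (Fin m)) = 1 := by
      rw [MonoidHom.mem_ker.mp hx]; rfl
    have hsone : s = 1 := hx1 ▸ hs1.symm
    have hx2 : x * x = 1 := by
      apply Subtype.ext
      show (x : Equiv.Perm (Fin m × Bool)) * x = 1
      rw [hσ, signedOf_mul]
      simpa [hsone] using signedOf_one
    haveI := hN
    rw [← QuotientGroup.eq_one_iff x]
    set y : evenSigned G ⧸ N := QuotientGroup.mk x with hy
    have hdvd2 : orderOf y ∣ 2 := by
      apply orderOf_dvd_of_pow_eq_one
      rw [hy, pow_two, ← QuotientGroup.mk_mul, hx2, QuotientGroup.mk_one]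
    have hdvdr : orderOf y ∣ r := hfin ▸ orderOf_dvd_natCard y
    have h1 : orderOf y = 1 := by
      have hg := Nat.dvd_gcd hdvd2 hdvdr
      have hcop : Nat.gcd 2 r = 1 := by
        rcases hodd with ⟨k, rfl⟩
        have h2 : (2 * k + 1) % 2 = 1 := by omega
        rw [Nat.gcd_rec, h2]; rfl
      exact Nat.eq_one_of_dvd_one (hcop ▸ hg)
    exact orderOf_eq_one_iff.mp h1
  exact ⟨hker, hN.map κ hsurj, by
    rw [Subgroup.index_map, sup_of_le_left hker, hr,
      MonoidHom.range_eq_top_of_surjective κ hsurj, Subgroup.index_top, mul_one]⟩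
end

section
/- Let m be a positive integer and G a subgroup of Perm(Fin m). If G contains no normal subgroup of odd index other than G itself, then 2^{m−1}·G contains no normal subgroup of odd index other than 2^{m−1}·G itself. -/
open Equiv Finset

namespace SignedPerm

lemma eq_of_signedOf_eq {s t : Equiv.Perm (Fin m)} {ε η : Fin m → Bool}
    (h : signedOf s ε = signedOf t η) : s = t := by
  ext i
  have := Equiv.ext_iff.mp h (i, false)
  simp only [signedOf, Equiv.coe_fn_mk, Prod.mk.injEq] at this
  exact congrArg Fin.val this.1

lemma mem_evenSigned {G : Subgroup (Equiv.Perm (Fin m))} {σ : Equiv.Perm (Fin m × Bool)} :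
    σ ∈ evenSigned G ↔ ∃ s ∈ G, ∃ ε : Fin m → Bool, σ = signedOf s ε ∧ signProd ε = 1 :=
  Iff.rfl

/-- The projection `2^{m-1}·G → G`. -/
noncomputable def projHom (G : Subgroup (Equiv.Perm (Fin m))) : evenSigned G →* G where
  toFun σ := ⟨σ.2.choose, σ.2.choose_spec.1⟩
  map_one' := by
    apply Subtype.ext
    exact eq_of_signedOf_eq
      (((1 : evenSigned G).2.choose_spec.2.choose_spec.1).symm.trans signedOf_one.symm)
  map_mul' σ τ := by
    apply Subtype.ext
    have hσ := σ.2.choose_spec.2.choose_spec.1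
    have hτ := τ.2.choose_spec.2.choose_spec.1
    have hστ := (σ * τ).2.choose_spec.2.choose_spec.1
    have h : ((σ * τ : evenSigned G) : Equiv.Perm (Fin m × Bool)) =
        signedOf (σ.2.choose * τ.2.choose)
          (fun i => xor (σ.2.choose_spec.2.choose (τ.2.choose i)) (τ.2.choose_spec.2.choose i)) := by
      show (σ : Equiv.Perm (Fin m × Bool)) * τ = _
      conv_lhs => rw [hσ, hτ]
      exact signedOf_mul _ _ _ _
    exact eq_of_signedOf_eq (hστ.symm.trans h)

lemma projHom_eq {G : Subgroup (Equiv.Perm (Fin m))} (σ : evenSigned G)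
    {s : Equiv.Perm (Fin m)} {ε : Fin m → Bool}
    (h : (σ : Equiv.Perm (Fin m × Bool)) = signedOf s ε) : (projHom G σ : Equiv.Perm (Fin m)) = s :=
  eq_of_signedOf_eq ((σ.2.choose_spec.2.choose_spec.1).symm.trans h)

lemma projHom_surjective (G : Subgroup (Equiv.Perm (Fin m))) :
    Function.Surjective (projHom G) := by
  rintro ⟨s, hs⟩
  refine ⟨⟨signedOf s (fun _ => false), s, hs, _, rfl, signProd_const_false⟩, Subtype.ext ?_⟩
  exact projHom_eq _ (rfl : _ = signedOf s (fun _ => false))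

lemma isPGroup_ker (G : Subgroup (Equiv.Perm (Fin m))) : IsPGroup 2 (projHom G).ker := by
  intro g
  refine ⟨1, ?_⟩
  have hg : (projHom G) g.1 = 1 := g.2
  obtain ⟨s, hs, ε, hσ, hε⟩ := g.1.2
  have hs1 : s = 1 := by
    have := projHom_eq g.1 hσ
    rw [hg] at this
    exact this.symm ▸ rfl
  subst hs1
  apply Subtype.ext; apply Subtype.ext
  show ((g.1 : Equiv.Perm (Fin m × Bool)) ^ (2 ^ 1)) = 1
  rw [hσ, show (2 : ℕ) ^ 1 = 2 from rfl, sq, signedOf_mul]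
  rw [show (fun i => xor (ε ((1 : Equiv.Perm (Fin m)) i)) (ε i)) = fun _ => false by
    funext i; simp]
  simpa using signedOf_one

end SignedPerm

attribute [irreducible] SignedPerm.projHom

set_option maxHeartbeats 1000000 in
open SignedPerm in
theorem statement2' (m : ℕ) (hm : 0 < m) (G : Subgroup (Equiv.Perm (Fin m)))
    (hG : ∀ M : Subgroup G, M.Normal → Odd M.index → M = ⊤) :
    ∀ N : Subgroup (evenSigned G), N.Normal → Odd N.index → N = ⊤ := by
  intro N hN hodd
  have hsurj := projHom_surjective G
  set φ := projHom G with hφ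
  have hMnorm : (N.map φ).Normal := Subgroup.Normal.map hN φ hsurj
  have hMidx : (N.map φ).index ∣ N.index := by
    rw [Subgroup.index_map, MonoidHom.range_eq_top.mpr hsurj, Subgroup.index_top, mul_one]
    exact Subgroup.index_dvd_of_le le_sup_left
  have hModd : Odd (N.map φ).index := by
    obtain ⟨c, hc⟩ := hMidx
    rw [hc, Nat.odd_mul] at hodd
    exact hodd.1
  have hM := hG _ hMnorm hModd
  have hker : φ.ker ≤ N := by
    haveI : Fact (Nat.Prime 2) := ⟨Nat.prime_two⟩
    haveI : Finite ((projHom G).ker) := Subtype.finite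
    obtain ⟨n, hn⟩ := IsPGroup.iff_card.mp (isPGroup_ker G)
    haveI := hN
    have h1 : N.relIndex φ.ker ∣ N.index := Subgroup.relIndex_dvd_index_of_normal N φ.ker
    have hodd' : Odd (N.relIndex φ.ker) := by
      obtain ⟨c, hc⟩ := h1
      rw [hc, Nat.odd_mul] at hodd
      exact hodd.1
    have h2 : N.relIndex φ.ker ∣ 2 ^ n := by
      rw [← hn]
      exact Subgroup.index_dvd_card _
    have : N.relIndex φ.ker = 1 := by
      have hc : Nat.Coprime (N.relIndex φ.ker) (2 ^ n) :=
        Nat.Coprime.pow_right n (Odd.coprime_two_right hodd')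
      exact Nat.Coprime.eq_one_of_dvd hc h2
    exact Subgroup.relIndex_eq_one.mp this
  calc N = N ⊔ φ.ker := (sup_eq_left.mpr hker).symm
    _ = Subgroup.comap φ (Subgroup.map φ N) := (Subgroup.comap_map_eq φ N).symm
    _ = Subgroup.comap φ ⊤ := by rw [hM]
    _ = ⊤ := by simp


open SignedPerm in
/-- if `G` contains no normal subgroup of odd index other than `G` itself, then
`2^{m-1}·G` contains no normal subgroup of odd index other than `2^{m-1}·G` itself. -/
theorem statement2 (m : ℕ) (hm : 0 < m) (G : Subgroup (Equiv.Perm (Fin m)))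
    (hG : ∀ M : Subgroup G, M.Normal → Odd M.index → M = ⊤) :
    ∀ N : Subgroup (evenSigned G), N.Normal → Odd N.index → N = ⊤ :=
  statement2' m hm G hG
end

section
/- Let m ≥ 3 and let G be a doubly transitive subgroup of Perm(Fin m). Then for every point x ∈ X = Fin m × Bool, the stabilizer of x in 2^{m−1}·G has exactly three orbits on X, namely {x}, {ν x}, and the complement X \ {x, ν x}. -/
open Equiv Finset

namespace SignedPerm

variable {m : ℕ}

lemma signProd_pair (j l : Fin m) (h : j ≠ l) (e : Bool) :
    signProd (fun i => if i = j ∨ i = l then e else false) = 1 := by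
  cases e
  · simp [signProd]
  · unfold signProd
    have key : ∀ i : Fin m, (if (if i = j ∨ i = l then true else false) then (-1:ℤˣ) else 1)
        = if i ∈ ({j, l} : Finset (Fin m)) then -1 else 1 := by
      intro i; by_cases hij : i = j ∨ i = l <;> simp [hij]
    simp_rw [key]
    rw [Finset.prod_ite_mem, Finset.univ_inter, Finset.prod_const,
      Finset.card_insert_of_notMem (by simpa using h), Finset.card_singleton]
    decide

end SignedPerm

open SignedPerm in
/-- if `m ≥ 3` and `G` is doubly transitive on `Fin m`, then for every point
`x ∈ X = Fin m × Bool` the stabilizer of `x` in `2^{m-1}·G` has exactly three orbits on `X`,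
namely `{x}`, `{ν x}` and the complement of `{x, ν x}`. -/
theorem statement4 (m : ℕ) (hm : 3 ≤ m) (G : Subgroup (Equiv.Perm (Fin m)))
    (hG : ∀ a b c d : Fin m, a ≠ b → c ≠ d → ∃ g ∈ G, g a = c ∧ g b = d)
    (x : Fin m × Bool) :
    {O : Set (Fin m × Bool) |
        ∃ y : Fin m × Bool, O = {z | ∃ σ ∈ evenSigned G, σ x = x ∧ σ y = z}}
      = {{x}, {nu m x}, ({x, nu m x} : Set (Fin m × Bool))ᶜ} := by
  obtain ⟨i₀, b₀⟩ := x
  have hfix : ∀ b : Bool,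
      {z | ∃ σ ∈ evenSigned G, σ (i₀, b₀) = (i₀, b₀) ∧ σ (i₀, b) = z} = {(i₀, b)} := by
    intro b
    ext z
    constructor
    · rintro ⟨σ, hσ, hx, rfl⟩
      obtain ⟨s, hs, ε, rfl, hε⟩ := hσ
      have hs0 : s i₀ = i₀ := congrArg Prod.fst hx
      have hε0 : ε i₀ = false := by
        have h2 : xor (ε i₀) b₀ = b₀ := congrArg Prod.snd hx
        cases b₀ <;> simpa using h2
      show signedOf s ε (i₀, b) = (i₀, b)
      simp [signedOf, hs0, hε0]
    · rintro rfl
      exact ⟨1, (evenSigned G).one_mem, rfl, rfl⟩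
  have hcompl : ∀ j c, j ≠ i₀ →
      {z | ∃ σ ∈ evenSigned G, σ (i₀, b₀) = (i₀, b₀) ∧ σ (j, c) = z}
        = {z : Fin m × Bool | z.1 ≠ i₀} := by
    intro j c hj
    ext ⟨k, d⟩
    simp only [Set.mem_setOf_eq]
    constructor
    · rintro ⟨σ, hσ, hx, hz⟩
      obtain ⟨s, hs, ε, rfl, hε⟩ := hσ
      have hs0 : s i₀ = i₀ := congrArg Prod.fst hx
      have hsj : s j = k := congrArg Prod.fst hz
      intro hk
      exact hj (s.injective (by rw [hsj, hs0, hk]))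
    · intro hk
      obtain ⟨s, hs, hsi, hsj⟩ := hG i₀ j i₀ k (Ne.symm hj) (Ne.symm hk)
      have hcard : ({i₀, j} : Finset (Fin m)).card < (Finset.univ : Finset (Fin m)).card := by
        have h1 : ({i₀, j} : Finset (Fin m)).card ≤ 2 := by
          refine le_trans (Finset.card_insert_le _ _) ?_
          simp
        have h2 : (Finset.univ : Finset (Fin m)).card = m := by simp
        omega
      have hss : ({i₀, j} : Finset (Fin m)) ⊂ Finset.univ :=
        Finset.ssubset_univ_iff.mpr (fun h => by rw [h] at hcard; exact lt_irrefl _ hcard)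
      obtain ⟨l, -, hl⟩ := Finset.exists_of_ssubset hss
      have hl1 : l ≠ i₀ := fun h => hl (by simp [h])
      have hl2 : l ≠ j := fun h => hl (by simp [h])
      refine ⟨signedOf s (fun i => if i = j ∨ i = l then xor d c else false),
        ⟨s, hs, _, rfl, signProd_pair j l (Ne.symm hl2) _⟩, ?_, ?_⟩
      · show (s i₀, xor (if i₀ = j ∨ i₀ = l then xor d c else false) b₀) = (i₀, b₀)
        rw [if_neg (by push_neg; exact ⟨Ne.symm hj, Ne.symm hl1⟩), hsi]
        simp
      · show (s j, xor (if j = j ∨ j = l then xor d c else false) c) = (k, d)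
        rw [if_pos (Or.inl rfl), hsj]
        cases c <;> cases d <;> rfl
  have hnux : nu m (i₀, b₀) = (i₀, !b₀) := rfl
  have hcomplset : ({(i₀, b₀), (i₀, !b₀)} : Set (Fin m × Bool))ᶜ
      = {z : Fin m × Bool | z.1 ≠ i₀} := by
    ext ⟨k, d⟩
    simp only [Set.mem_compl_iff, Set.mem_insert_iff, Set.mem_singleton_iff,
      Set.mem_setOf_eq, Prod.mk.injEq, not_or]
    constructor
    · rintro ⟨h1, h2⟩ rfl
      cases d <;> cases b₀ <;> simp_all
    · intro h
      exact ⟨fun hh => h hh.1, fun hh => h hh.1⟩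
  ext O
  simp only [Set.mem_setOf_eq, Set.mem_insert_iff, Set.mem_singleton_iff]
  constructor
  · rintro ⟨⟨j, c⟩, rfl⟩
    by_cases hj : j = i₀
    · subst hj
      by_cases hc : c = b₀
      · subst hc
        left; exact hfix _
      · have hc' : c = !b₀ := by cases c <;> cases b₀ <;> simp_all
        subst hc'
        right; left
        rw [hfix, hnux]
    · right; right
      rw [hcompl j c hj, hnux, hcomplset]
  · rintro (rfl | rfl | rfl)
    · exact ⟨(i₀, b₀), (hfix b₀).symm⟩
    · exact ⟨(i₀, !b₀), by rw [hfix, hnux]⟩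
    · have : Nontrivial (Fin m) := Fin.nontrivial_iff_two_le.mpr (by omega)
      obtain ⟨j, hj⟩ := exists_ne i₀
      exact ⟨(j, true), by rw [hcompl j true hj, hnux, hcomplset]⟩
end

section
/- Let m ≥ 3 and let G be a doubly transitive subgroup of Perm(Fin m). Then the 𝔽₃-algebra of all 2^{m−1}·G-equivariant 𝔽₃-linear endomorphisms of the permutation module 𝔽₃^X (X = Fin m × Bool) has dimension exactly 3 over 𝔽₃. -/
/-!
An equivariant endomorphism of `𝔽₃^X` is the same as a matrix on `X` invariant under
`2^{m-1}·G`, i.e. constant on the orbits of `2^{m-1}·G` on `X × X`. There are exactly three of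
them: the diagonal, the graph of `ν`, and the pairs with distinct indices. Double transitivity of
`G` moves any pair of distinct indices to any other, and since `m ≥ 3` the signs can then be
fixed with sign product `1` by flipping at a third index. So the commutant is free on the three
orbit indicator matrices.
-/

open Equiv Finset

namespace SignedPerm

/-- The 𝔽₃-subalgebra (here: submodule) of `H`-equivariant 𝔽₃-linear endomorphisms of the
permutation module `𝔽₃^X`, for `H = 2^{m-1}·G`. -/
def equivEnd {m : ℕ} (G : Subgroup (Equiv.Perm (Fin m))) :
    Submodule (ZMod 3) (Module.End (ZMod 3) ((Fin m × Bool) → ZMod 3)) where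
  carrier := {T | ∀ σ ∈ evenSigned G, ∀ φ : (Fin m × Bool) → ZMod 3, ∀ x,
      T (fun y => φ (σ⁻¹ y)) x = T φ (σ⁻¹ x)}
  add_mem' := by
    intro a b ha hb σ hσ φ x
    simp only [LinearMap.add_apply, Pi.add_apply, ha σ hσ φ x, hb σ hσ φ x]
  zero_mem' := by intro σ hσ φ x; simp
  smul_mem' := by
    intro c a ha σ hσ φ x
    simp only [LinearMap.smul_apply, Pi.smul_apply, ha σ hσ φ x]

end SignedPerm


namespace SignedPerm

variable {m : ℕ}

lemma nu_apply_ne (x : Fin m × Bool) : nu m x ≠ x := by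
  simp [nu, Prod.ext_iff]

lemma signedOf_nu (s : Equiv.Perm (Fin m)) (ε : Fin m → Bool) (x : Fin m × Bool) :
    signedOf s ε (nu m x) = nu m (signedOf s ε x) := by
  simp [signedOf, nu]

lemma signProd_flip_pair {i k : Fin m} (hik : i ≠ k) (b : Bool) :
    signProd (fun l => b && (decide (l = i) || decide (l = k))) = 1 := by
  cases b
  · exact signProd_const_false
  · simp [signProd, Finset.prod_ite, Finset.filter_or, Finset.filter_eq',
      Finset.card_pair hik]

lemma exists_signProd_eq_one (hm : 3 ≤ m) {i j : Fin m} (hij : i ≠ j) (a b : Bool) :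
    ∃ ε : Fin m → Bool, ε i = a ∧ ε j = b ∧ signProd ε = 1 := by
  obtain ⟨k, hki, hkj⟩ := Fin.exists_ne_and_ne_of_two_lt i j (by omega)
  refine ⟨fun l => xor (a && (decide (l = i) || decide (l = k)))
    (b && (decide (l = j) || decide (l = k))), ?_, ?_, ?_⟩
  · simp [hij, hki.symm]
  · simp [hij.symm, hkj.symm]
  · rw [signProd_xor, signProd_flip_pair hki.symm, signProd_flip_pair hkj.symm, mul_one]

lemma apply_nu_of_mem_evenSigned {G : Subgroup (Equiv.Perm (Fin m))}
    {σ : Equiv.Perm (Fin m × Bool)} (hσ : σ ∈ evenSigned G) (x : Fin m × Bool) :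
    σ (nu m x) = nu m (σ x) := by
  obtain ⟨s, -, ε, rfl, -⟩ := hσ
  exact signedOf_nu s ε x

/-- Labels the three orbits of `2^{m-1}·G` on pairs of points: the diagonal, the graph of `ν`,
and the pairs with distinct indices. -/
def orbitalType (x y : Fin m × Bool) : Fin 3 :=
  if y = x then 0 else if y = nu m x then 1 else 2

lemma orbitalType_eq_zero_iff {x y : Fin m × Bool} : orbitalType x y = 0 ↔ y = x := by
  unfold orbitalType; split_ifs <;> simp_all

lemma orbitalType_eq_one_iff {x y : Fin m × Bool} : orbitalType x y = 1 ↔ y = nu m x := by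
  unfold orbitalType; split_ifs <;> simp_all [(nu_apply_ne _).symm]

lemma orbitalType_eq_two_iff {x y : Fin m × Bool} : orbitalType x y = 2 ↔ x.1 ≠ y.1 := by
  obtain ⟨i, a⟩ := x
  obtain ⟨j, b⟩ := y
  unfold orbitalType
  by_cases hij : i = j
  · subst hij
    cases a <;> cases b <;> simp [nu]
  · simp [nu, hij, Ne.symm hij]

lemma orbitalType_signedOf (s : Equiv.Perm (Fin m)) (ε : Fin m → Bool) (x y : Fin m × Bool) :
    orbitalType (signedOf s ε x) (signedOf s ε y) = orbitalType x y := by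
  simp only [orbitalType, ← signedOf_nu, (signedOf s ε).injective.eq_iff]

variable {G : Subgroup (Equiv.Perm (Fin m))}

lemma exists_mem_evenSigned_of_fst_ne (hm : 3 ≤ m)
    (hG : ∀ a b c d : Fin m, a ≠ b → c ≠ d → ∃ g ∈ G, g a = c ∧ g b = d)
    {x y x' y' : Fin m × Bool} (hxy : x.1 ≠ y.1) (hxy' : x'.1 ≠ y'.1) :
    ∃ σ ∈ evenSigned G, σ x = x' ∧ σ y = y' := by
  obtain ⟨g, hg, hgx, hgy⟩ := hG _ _ _ _ hxy hxy'
  obtain ⟨ε, hεx, hεy, hε⟩ := exists_signProd_eq_one hm hxy (xor x'.2 x.2) (xor y'.2 y.2)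
  refine ⟨signedOf g ε, ⟨g, hg, ε, rfl, hε⟩, ?_, ?_⟩
  · simp [signedOf, hgx, hεx]
  · simp [signedOf, hgy, hεy]

lemma exists_mem_evenSigned_apply_eq (hm : 3 ≤ m)
    (hG : ∀ a b c d : Fin m, a ≠ b → c ≠ d → ∃ g ∈ G, g a = c ∧ g b = d)
    (x x' : Fin m × Bool) : ∃ σ ∈ evenSigned G, σ x = x' := by
  obtain ⟨k, hk, -⟩ := Fin.exists_ne_and_ne_of_two_lt x.1 x.1 (by omega)
  obtain ⟨k', hk', -⟩ := Fin.exists_ne_and_ne_of_two_lt x'.1 x'.1 (by omega)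
  obtain ⟨σ, hσ, hσx, -⟩ := exists_mem_evenSigned_of_fst_ne hm hG
    (y := (k, false)) (y' := (k', false)) hk.symm hk'.symm
  exact ⟨σ, hσ, hσx⟩

lemma exists_mem_evenSigned_of_orbitalType_eq (hm : 3 ≤ m)
    (hG : ∀ a b c d : Fin m, a ≠ b → c ≠ d → ∃ g ∈ G, g a = c ∧ g b = d)
    {x y x' y' : Fin m × Bool} (h : orbitalType x y = orbitalType x' y') :
    ∃ σ ∈ evenSigned G, σ x = x' ∧ σ y = y' := by
  generalize ht : orbitalType x' y' = t at h
  obtain rfl | rfl | rfl : t = 0 ∨ t = 1 ∨ t = 2 := by fin_cases t <;> simp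
  · rw [orbitalType_eq_zero_iff] at h ht
    subst y y'
    obtain ⟨σ, hσ, rfl⟩ := exists_mem_evenSigned_apply_eq hm hG x x'
    exact ⟨σ, hσ, rfl, rfl⟩
  · rw [orbitalType_eq_one_iff] at h ht
    subst y y'
    obtain ⟨σ, hσ, rfl⟩ := exists_mem_evenSigned_apply_eq hm hG x x'
    exact ⟨σ, hσ, rfl, apply_nu_of_mem_evenSigned hσ x⟩
  · rw [orbitalType_eq_two_iff] at h ht
    exact exists_mem_evenSigned_of_fst_ne hm hG h ht

lemma orbitalType_surjective (hm : 2 ≤ m) :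
    Function.Surjective (Function.uncurry (orbitalType (m := m))) := by
  let x₀ : Fin m × Bool := (⟨0, by omega⟩, false)
  let x₁ : Fin m × Bool := (⟨1, by omega⟩, false)
  intro t
  fin_cases t
  · exact ⟨(x₀, x₀), orbitalType_eq_zero_iff.2 rfl⟩
  · exact ⟨(x₀, nu m x₀), orbitalType_eq_one_iff.2 rfl⟩
  · exact ⟨(x₀, x₁), orbitalType_eq_two_iff.2 (by simp [x₀, x₁])⟩

def orbitalMatrix (R : Type*) [CommSemiring R] :
    (Fin 3 → R) →ₗ[R] Matrix (Fin m × Bool) (Fin m × Bool) R where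
  toFun c := Matrix.of fun x y => c (orbitalType x y)
  map_add' _ _ := rfl
  map_smul' _ _ := rfl

@[simp] lemma orbitalMatrix_apply {R : Type*} [CommSemiring R] (c : Fin 3 → R)
    (x y : Fin m × Bool) : orbitalMatrix R c x y = c (orbitalType x y) := rfl

lemma orbitalMatrix_injective (hm : 2 ≤ m) (R : Type*) [CommSemiring R] :
    Function.Injective (orbitalMatrix (m := m) R) := by
  intro c c' h
  funext t
  obtain ⟨⟨x, y⟩, rfl⟩ := orbitalType_surjective hm t
  exact congrFun (congrFun h x) y

lemma mem_range_orbitalMatrix_iff (hm : 3 ≤ m)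
    (hG : ∀ a b c d : Fin m, a ≠ b → c ≠ d → ∃ g ∈ G, g a = c ∧ g b = d)
    {R : Type*} [CommSemiring R] (M : Matrix (Fin m × Bool) (Fin m × Bool) R) :
    M ∈ LinearMap.range (orbitalMatrix R) ↔
      ∀ σ ∈ evenSigned G, ∀ x y, M (σ x) (σ y) = M x y := by
  constructor
  · rintro ⟨c, rfl⟩ σ ⟨s, -, ε, rfl, -⟩ x y
    simp [orbitalType_signedOf]
  · intro hM
    have hfac : (Function.uncurry M).FactorsThrough (Function.uncurry orbitalType) := by
      rintro ⟨x, y⟩ ⟨x', y'⟩ h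
      obtain ⟨σ, hσ, rfl, rfl⟩ := exists_mem_evenSigned_of_orbitalType_eq hm hG h
      exact (hM σ hσ x y).symm
    refine ⟨Function.extend (Function.uncurry orbitalType) (Function.uncurry M) 0, ?_⟩
    ext x y
    exact hfac.extend_apply 0 (x, y)

lemma mem_equivEnd_iff (T : Module.End (ZMod 3) ((Fin m × Bool) → ZMod 3)) :
    T ∈ equivEnd G ↔
      ∀ σ ∈ evenSigned G, ∀ x y,
        LinearMap.toMatrix' T (σ x) (σ y) = LinearMap.toMatrix' T x y := by
  constructor
  · intro hT σ hσ x y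
    have hsingle : (fun z => (Pi.single y 1 : _ → ZMod 3) (σ⁻¹ z)) = Pi.single (σ y) 1 :=
      Pi.single_comp_equiv σ⁻¹ y 1
    have h := hT σ hσ (Pi.single y 1) (σ x)
    rw [hsingle] at h
    simpa [LinearMap.toMatrix'_apply] using h
  · intro hM σ hσ φ x
    rw [← LinearMap.toMatrix'_mulVec, ← LinearMap.toMatrix'_mulVec]
    simp only [Matrix.mulVec, dotProduct]
    rw [← Equiv.sum_comp σ]
    refine Finset.sum_congr rfl fun y _ => ?_
    rw [← hM σ hσ (σ⁻¹ x) y]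
    simp

lemma map_toMatrix'_equivEnd (hm : 3 ≤ m)
    (hG : ∀ a b c d : Fin m, a ≠ b → c ≠ d → ∃ g ∈ G, g a = c ∧ g b = d) :
    (equivEnd G).map (LinearMap.toMatrix' (R := ZMod 3) (m := Fin m × Bool)
      (n := Fin m × Bool)).toLinearMap = LinearMap.range (orbitalMatrix (ZMod 3)) := by
  ext M
  rw [Submodule.map_equiv_eq_comap_symm, Submodule.mem_comap, mem_range_orbitalMatrix_iff hm hG,
    mem_equivEnd_iff]
  simp

end SignedPerm

open SignedPerm in
/-- if `m ≥ 3` and `G` is doubly transitive on `Fin m`, then the 𝔽₃-algebra of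
`2^{m-1}·G`-equivariant 𝔽₃-linear endomorphisms of `𝔽₃^X` has dimension exactly 3 over `𝔽₃`. -/
theorem statement6 (m : ℕ) (hm : 3 ≤ m) (G : Subgroup (Equiv.Perm (Fin m)))
    (hG : ∀ a b c d : Fin m, a ≠ b → c ≠ d → ∃ g ∈ G, g a = c ∧ g b = d) :
    Module.finrank (ZMod 3) (equivEnd G) = 3 := by
  rw [← LinearEquiv.finrank_map_eq LinearMap.toMatrix', map_toMatrix'_equivEnd hm hG,
    LinearMap.finrank_range_of_inj (orbitalMatrix_injective (by omega) _), Module.finrank_fin_fun]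
end

section
/- Let K be a field of characteristic 0, m an odd positive integer, and h ∈ K[x] a monic even polynomial (h(−x) = h(x)) of degree 2m without multiple roots and with h(0) ≠ 0. Let L be a splitting field of h over K and β₁,…,βₘ ∈ L be such that the roots of h are the 2m pairwise distinct elements ±β₁,…,±βₘ. Then (∏ᵢ βᵢ)² = −h(0); moreover every σ ∈ Gal(L/K) satisfies σ(∏ᵢβᵢ) = ±∏ᵢβᵢ, and the following are equivalent: (a) σ(∏ᵢ βᵢ) = ∏ᵢ βᵢ for every σ ∈ Gal(L/K); (b) −h(0) is a square in K. -/
/-!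
Since the roots of `h` are `±βᵢ`, the constant term of the monic polynomial `h` is
`(-1)^(2m) ∏ᵢ βᵢ ∏ᵢ (-βᵢ) = (-1)^m (∏ᵢ βᵢ)²`, which is `-(∏ᵢ βᵢ)²` as `m` is odd. So
`∏ᵢ βᵢ` is a square root of the element `-h(0)` of `K`: every `K`-automorphism sends it to
one of the two square roots `±∏ᵢ βᵢ`, and as `L/K` is Galois (a splitting field in
characteristic `0`), it is fixed by all of them iff it lies in `K`, i.e. iff `-h(0)` is a
square in `K`.
-/

open Polynomial Finset

section PlusMinus

variable {ι R : Type*} [Fintype ι] [CommRing R]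

theorem prod_map_add_map_neg (β : ι → R) :
    (univ.val.map β + univ.val.map (fun i => -β i)).prod =
      (-1) ^ Fintype.card ι * (∏ i, β i) ^ 2 := by
  rw [Multiset.prod_add, ← prod_eq_multiset_prod, ← prod_eq_multiset_prod, prod_neg, card_univ]
  ring

theorem nodup_map_add_map_neg {β : ι → R} (hinj : Function.Injective β)
    (hne : ∀ i j, β i ≠ -β j) : (univ.val.map β + univ.val.map (fun i => -β i)).Nodup := by
  refine Multiset.nodup_add.mpr ⟨univ.nodup.map hinj,
    univ.nodup.map fun i j hij => hinj (neg_injective hij), ?_⟩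
  rw [Multiset.disjoint_left]
  intro x hx hx'
  obtain ⟨i, -, rfl⟩ := Multiset.mem_map.mp hx
  obtain ⟨j, -, hj⟩ := Multiset.mem_map.mp hx'
  exact hne i j hj.symm

end PlusMinus

theorem Polynomial.roots_eq_of_nodup_of_natDegree_le {L : Type*} [Field L] {q : L[X]}
    (hq : q ≠ 0) (hsplits : q.Splits) {S : Multiset L} (hS : S.Nodup)
    (hroot : ∀ x ∈ S, q.IsRoot x) (hdeg : q.natDegree ≤ Multiset.card S) : q.roots = S := by
  refine (Multiset.eq_of_le_of_card_le ?_ ?_).symm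
  · exact (Multiset.le_iff_subset hS).mpr fun x hx => (mem_roots hq).mpr (hroot x hx)
  · rwa [← hsplits.natDegree_eq_card_roots]

theorem Polynomial.sq_prod_eq_neg_coeff_zero_of_roots_eq {L : Type*} [Field L] {m : ℕ}
    (hm : Odd m) {q : L[X]} (hmonic : q.Monic) (hsplits : q.Splits) (hdeg : q.natDegree = 2 * m)
    (β : Fin m → L) (hroots : q.roots = univ.val.map β + univ.val.map (fun i => -β i)) :
    (∏ i, β i) ^ 2 = -q.coeff 0 := by
  rw [hsplits.coeff_zero_eq_prod_roots_of_monic hmonic, hroots, prod_map_add_map_neg,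
    Fintype.card_fin, hdeg, pow_mul, hm.neg_one_pow]
  ring

theorem AlgEquiv.apply_eq_or_eq_neg_of_sq_eq_algebraMap {K L : Type*} [CommRing K] [CommRing L]
    [NoZeroDivisors L] [Algebra K L] (σ : L ≃ₐ[K] L) {x : L} {a : K}
    (hx : x ^ 2 = algebraMap K L a) : σ x = x ∨ σ x = -x := by
  rw [← sq_eq_sq_iff_eq_or_eq_neg, ← map_pow, hx, σ.commutes]

theorem IsGalois.forall_apply_eq_iff_exists_sq_eq {K L : Type*} [Field K] [Field L] [Algebra K L]
    [IsGalois K L] {x : L} {a : K} (hx : x ^ 2 = algebraMap K L a) :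
    (∀ σ : L ≃ₐ[K] L, σ x = x) ↔ ∃ c : K, c ^ 2 = a := by
  rw [← InfiniteGalois.mem_range_algebraMap_iff_fixed]
  constructor
  · rintro ⟨c, rfl⟩
    exact ⟨c, (algebraMap K L).injective (by rw [map_pow, hx])⟩
  · rintro ⟨c, rfl⟩
    rw [map_pow, sq_eq_sq_iff_eq_or_eq_neg] at hx
    rcases hx with rfl | rfl
    exacts [⟨c, rfl⟩, ⟨-c, map_neg _ c⟩]

theorem statement9_general (K : Type*) [Field K] [CharZero K] (m : ℕ) (hm : Odd m)
    (h : Polynomial K) (hmonic : h.Monic)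
    (hdeg : h.natDegree = 2 * m)
    (L : Type*) [Field L] [Algebra K L] [Polynomial.IsSplittingField K L h]
    (β : Fin m → L)
    (hroots : ∀ x : L, Polynomial.aeval x h = 0 ↔ ∃ i, x = β i ∨ x = -β i)
    (hinj : Function.Injective β) (hne : ∀ i j, β i ≠ -β j) :
    (∏ i, β i) ^ 2 = algebraMap K L (-(h.coeff 0)) ∧
    (∀ σ : L ≃ₐ[K] L, σ (∏ i, β i) = ∏ i, β i ∨ σ (∏ i, β i) = -∏ i, β i) ∧
    ((∀ σ : L ≃ₐ[K] L, σ (∏ i, β i) = ∏ i, β i) ↔ ∃ c : K, c ^ 2 = -(h.coeff 0)) := by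
  have hsplits : (h.map (algebraMap K L)).Splits := IsSplittingField.splits L h
  have hmap_roots : (h.map (algebraMap K L)).roots =
      univ.val.map β + univ.val.map (fun i => -β i) := by
    refine roots_eq_of_nodup_of_natDegree_le (hmonic.map _).ne_zero hsplits
      (nodup_map_add_map_neg hinj hne) (fun x hx => ?_) ?_
    · rw [IsRoot, eval_map_algebraMap, hroots]
      simpa [exists_or, eq_comm] using hx
    · simp [hdeg, two_mul]
  have hsq : (∏ i, β i) ^ 2 = algebraMap K L (-(h.coeff 0)) := by
    rw [map_neg, ← coeff_map, sq_prod_eq_neg_coeff_zero_of_roots_eq hm (hmonic.map _) hsplits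
      (by rw [natDegree_map, hdeg]) β hmap_roots]
  have : FiniteDimensional K L := IsSplittingField.finiteDimensional L h
  have : IsGalois K L := isGalois_iff.mpr ⟨inferInstance, Normal.of_isSplittingField (E := L) h⟩
  exact ⟨hsq, fun σ => σ.apply_eq_or_eq_neg_of_sq_eq_algebraMap hsq,
    IsGalois.forall_apply_eq_iff_exists_sq_eq hsq⟩

/-- for a monic even squarefree polynomial `h` of degree `2m` (`m` odd) with
`h(0) ≠ 0`, whose roots in a splitting field `L` are the `2m` pairwise distinct elements
`±β₁, …, ±βₘ`, one has `(∏ᵢ βᵢ)² = -h(0)`; every `σ ∈ Gal(L/K)` sends `∏ᵢ βᵢ` to `±∏ᵢ βᵢ`;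
and `∏ᵢ βᵢ` is Galois-invariant iff `-h(0)` is a square in `K`. -/
theorem statement9 (K : Type*) [Field K] [CharZero K] (m : ℕ) (hm0 : 0 < m) (hm : Odd m)
    (h : Polynomial K) (hmonic : h.Monic) (heven : ∀ j : ℕ, Odd j → h.coeff j = 0)
    (hdeg : h.natDegree = 2 * m) (hsq : Squarefree h) (h0 : h.coeff 0 ≠ 0)
    (L : Type*) [Field L] [Algebra K L] [Polynomial.IsSplittingField K L h]
    (β : Fin m → L)
    (hroots : ∀ x : L, Polynomial.aeval x h = 0 ↔ ∃ i, x = β i ∨ x = -β i)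
    (hinj : Function.Injective β) (hne : ∀ i j, β i ≠ -β j) :
    (∏ i, β i) ^ 2 = algebraMap K L (-(h.coeff 0)) ∧
    (∀ σ : L ≃ₐ[K] L, σ (∏ i, β i) = ∏ i, β i ∨ σ (∏ i, β i) = -∏ i, β i) ∧
    ((∀ σ : L ≃ₐ[K] L, σ (∏ i, β i) = ∏ i, β i) ↔ ∃ c : K, c ^ 2 = -(h.coeff 0)) :=
  statement9_general K m hm h hmonic hdeg L β hroots hinj hne
end

section
/- Let W(D₅) ≤ Perm(Fin 5 × Bool) be the group 2⁴·S₅ of signed permutations of Fin 5 × Bool with sign product 1 (the Weyl group of the root system D₅), a group of order 2⁴·5!. Then the commutator subgroup of W(D₅) has index 2 in W(D₅) and is a perfect group (it equals its own commutator subgroup); consequently W(D₅) has exactly one subgroup of index 2. -/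
open Equiv Finset

/-!
Writing a signed permutation as `(s, ε)`, the sign of the underlying permutation `s` is a
surjective homomorphism `W(Dₘ) → ±1` with kernel `2^(m-1)·Aₘ`, which therefore contains the
commutator subgroup. Conversely `2^(m-1)·Aₘ` is perfect for `m ≥ 5`: it is generated by the
`(s, 0)` with `s ∈ Aₘ`, which is perfect, and by the pair flips `(1, eₐ + e_b)`; each pair flip is
the commutator of `(1, eₐ + e_c)` with the 3-cycle `(a c b)`. Finally, a subgroup of index 2
contains all commutators, so a commutator subgroup of index 2 is the only subgroup of index 2.
-/

section Commutator

variable {G : Type*} [Group G]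

lemma commutator_eq_commutator_subgroupOf (H : Subgroup G) :
    commutator H = ⁅H, H⁆.subgroupOf H := by
  rw [← H.map_subtype_commutator, Subgroup.subgroupOf,
    Subgroup.comap_map_eq_self_of_injective H.subtype_injective]

lemma commutator_subgroupOf_of_le {H K : Subgroup G} (h : H ≤ K) :
    ⁅H.subgroupOf K, H.subgroupOf K⁆ = ⁅H, H⁆.subgroupOf K := by
  apply Subgroup.map_injective K.subtype_injective
  rw [Subgroup.map_commutator, Subgroup.map_subgroupOf_eq_of_le h,
    Subgroup.map_subgroupOf_eq_of_le (H.commutator_le_self.trans h)]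

lemma commutator_le_of_index_eq_two {H : Subgroup G} (hH : H.index = 2) : commutator G ≤ H := by
  rw [commutator_def, Subgroup.commutator_le]
  intro g _ h _
  simp only [commutatorElement_def, Subgroup.mul_mem_iff_of_index_two hH, H.inv_mem_iff]
  tauto

lemma existsUnique_index_eq_two_of_index_commutator (h : (commutator G).index = 2) :
    ∃! H : Subgroup G, H.index = 2 := by
  refine ⟨commutator G, h, fun H hH => ?_⟩
  have hle := commutator_le_of_index_eq_two hH
  have hrel := Subgroup.relIndex_mul_index hle
  rw [hH, h] at hrel
  exact le_antisymm (Subgroup.relIndex_eq_one.mp (by omega)) hle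

end Commutator

namespace SignedPerm

variable {m : ℕ}

@[simp]
lemma signedOf_apply (s : Perm (Fin m)) (ε : Fin m → Bool) (p : Fin m × Bool) :
    signedOf s ε p = (s p.1, xor (ε p.1) p.2) := rfl

lemma signedOf_inj {s t : Perm (Fin m)} {ε η : Fin m → Bool} :
    signedOf s ε = signedOf t η ↔ s = t ∧ ε = η := by
  refine ⟨fun h => ?_, fun ⟨hs, hε⟩ => hs ▸ hε ▸ rfl⟩
  have h' (i : Fin m) := congrArg (· (i, false)) h
  simp only [signedOf_apply, Bool.xor_false, Prod.mk.injEq] at h'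
  exact ⟨Equiv.ext fun i => (h' i).1, funext fun i => (h' i).2⟩

lemma signedOf_mem_evenSigned {G : Subgroup (Perm (Fin m))} {s : Perm (Fin m)}
    {ε : Fin m → Bool} : signedOf s ε ∈ evenSigned G ↔ s ∈ G ∧ signProd ε = 1 := by
  refine ⟨fun ⟨t, ht, η, h, hη⟩ => ?_, fun ⟨hs, hε⟩ => ⟨s, hs, ε, rfl, hε⟩⟩
  obtain ⟨rfl, rfl⟩ := signedOf_inj.1 h
  exact ⟨ht, hη⟩

lemma evenSigned_mono {G H : Subgroup (Perm (Fin m))} (h : G ≤ H) :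
    evenSigned G ≤ evenSigned H :=
  fun _ ⟨s, hs, ε, hσ, hε⟩ => ⟨s, h hs, ε, hσ, hε⟩

lemma card_evenSigned (G : Subgroup (Perm (Fin m))) :
    Nat.card (evenSigned G) = Nat.card G * Nat.card {ε : Fin m → Bool // signProd ε = 1} := by
  rw [← Nat.card_prod]
  refine Nat.card_congr (Equiv.ofBijective
    (fun p => ⟨signedOf p.1 p.2, signedOf_mem_evenSigned.2 ⟨p.1.2, p.2.2⟩⟩) ⟨?_, ?_⟩).symm
  · intro p q h
    obtain ⟨hs, hε⟩ := signedOf_inj.1 (congrArg Subtype.val h)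
    exact Prod.ext (Subtype.ext hs) (Subtype.ext hε)
  · rintro ⟨_, s, hs, ε, rfl, hε⟩
    exact ⟨(⟨s, hs⟩, ⟨ε, hε⟩), rfl⟩

lemma signProd_cons {n : ℕ} (b : Bool) (η : Fin n → Bool) :
    signProd (Fin.cons b η : Fin (n + 1) → Bool) = (if b then -1 else 1) * signProd η := by
  simp [signProd, Fin.prod_univ_succ]

lemma ite_mul_eq_one_iff (b : Bool) (u : ℤˣ) :
    (if b then -1 else 1) * u = 1 ↔ b = decide (u = -1) := by
  rcases Int.units_eq_one_or u with rfl | rfl <;> cases b <;> decide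

lemma card_signProd_eq_one (n : ℕ) :
    Nat.card {ε : Fin (n + 1) → Bool // signProd ε = 1} = 2 ^ n := by
  -- the first sign is forced by the others
  have e : {ε : Fin (n + 1) → Bool // signProd ε = 1} ≃ (Fin n → Bool) :=
    { toFun := fun ε => Fin.tail ε.1
      invFun := fun η => ⟨Fin.cons (decide (signProd η = -1)) η,
        by rw [signProd_cons, ite_mul_eq_one_iff]⟩
      left_inv := fun ⟨ε, hε⟩ => by
        rw [← Fin.cons_self_tail ε, signProd_cons, ite_mul_eq_one_iff] at hε
        ext1
        change Fin.cons _ (Fin.tail ε) = ε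
        rw [← hε, Fin.cons_self_tail]
      right_inv := fun η => Fin.tail_cons _ _ }
  rw [Nat.card_congr e]
  simp

noncomputable def basePerm (G : Subgroup (Perm (Fin m))) : evenSigned G →* Perm (Fin m) where
  toFun σ := Equiv.ofBijective (fun i => ((σ : Perm (Fin m × Bool)) (i, false)).1) <| by
    obtain ⟨s, -, ε, hσ, -⟩ := σ.2
    simpa only [hσ, signedOf_apply] using s.bijective
  map_one' := Equiv.ext fun _ => rfl
  map_mul' σ τ := by
    obtain ⟨s, -, ε, hσ, -⟩ := σ.2
    obtain ⟨t, -, η, hτ, -⟩ := τ.2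
    ext i
    simp [hσ, hτ]

lemma basePerm_eq {G : Subgroup (Perm (Fin m))} {σ : evenSigned G} {s : Perm (Fin m)}
    {ε : Fin m → Bool} (h : (σ : Perm (Fin m × Bool)) = signedOf s ε) : basePerm G σ = s := by
  ext i
  simp [basePerm, h]

lemma basePerm_mem {G : Subgroup (Perm (Fin m))} (σ : evenSigned G) : basePerm G σ ∈ G := by
  obtain ⟨s, hs, ε, hσ, -⟩ := σ.2
  rwa [basePerm_eq hσ]

lemma basePerm_top_surjective : Function.Surjective (basePerm (⊤ : Subgroup (Perm (Fin m)))) :=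
  fun s => ⟨⟨signedOf s fun _ => false, signedOf_mem_evenSigned.2 ⟨trivial, signProd_const_false⟩⟩,
    basePerm_eq (ε := fun _ => false) rfl⟩

lemma comap_basePerm (G H : Subgroup (Perm (Fin m))) :
    H.comap (basePerm G) = (evenSigned H).subgroupOf (evenSigned G) := by
  ext σ
  obtain ⟨s, hs, ε, hσ, hε⟩ := σ.2
  simp [Subgroup.mem_subgroupOf, hσ, basePerm_eq hσ, signedOf_mem_evenSigned, hε]

lemma index_evenSigned_alternatingGroup (hm : 2 ≤ m) :
    ((evenSigned (alternatingGroup (Fin m))).subgroupOf (evenSigned ⊤)).index = 2 := by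
  have : Nontrivial (Fin m) := Fin.nontrivial_iff_two_le.2 hm
  rw [← comap_basePerm, Subgroup.index_comap_of_surjective _ basePerm_top_surjective,
    alternatingGroup.index_eq_two]

lemma commutator_evenSigned_le (G : Subgroup (Perm (Fin m))) :
    ⁅evenSigned G, evenSigned G⁆ ≤ evenSigned ⁅G, G⁆ := by
  rw [← Subgroup.map_subtype_commutator, Subgroup.map_le_iff_le_comap, ← Subgroup.subgroupOf,
    ← comap_basePerm, ← Subgroup.map_le_iff_le_comap, commutator_def, Subgroup.map_commutator,
    ← MonoidHom.range_eq_map]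
  have hrange : (basePerm G).range ≤ G := by
    rintro _ ⟨σ, rfl⟩
    exact basePerm_mem σ
  exact Subgroup.commutator_mono hrange hrange

open scoped commutatorElement in
lemma commutatorElement_signedOf_one (ε : Fin m → Bool) (t : Perm (Fin m)) :
    ⁅signedOf 1 ε, signedOf t fun _ => false⁆ = signedOf 1 fun i => xor (ε i) (ε (t⁻¹ i)) := by
  ext p <;> simp [commutatorElement_def, signedOf_inv, signedOf_mul, Bool.xor_comm]

def pairFlip (a b : Fin m) (i : Fin m) : Bool := xor (decide (i = a)) (decide (i = b))

lemma signProd_pairFlip (a b : Fin m) : signProd (pairFlip a b) = 1 := by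
  have hsingle (c : Fin m) : signProd (fun i => decide (i = c)) = -1 := by
    simp [signProd]
  rw [show pairFlip a b = fun i => xor (decide (i = a)) (decide (i = b)) from rfl, signProd_xor,
    hsingle, hsingle, neg_one_mul, neg_neg]

lemma pairFlip_inv_apply (a b : Fin m) (t : Perm (Fin m)) (i : Fin m) :
    pairFlip a b (t⁻¹ i) = pairFlip (t a) (t b) i := by
  simp only [pairFlip, Perm.inv_eq_iff_eq]

lemma pairFlip_xor_pairFlip (a b c i : Fin m) :
    xor (pairFlip a b i) (pairFlip b c i) = pairFlip a c i := by
  simp only [pairFlip]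
  cases decide (i = a) <;> cases decide (i = b) <;> cases decide (i = c) <;> rfl

lemma pairFlip_self (a : Fin m) : pairFlip a a = fun _ => false := by
  funext i
  simp [pairFlip]

lemma signProd_eq_neg_one_pow (ε : Fin m → Bool) : signProd ε = (-1) ^ #{i | ε i} := by
  simp [signProd, Finset.prod_ite]

lemma signProd_eq_one_iff_even (ε : Fin m → Bool) : signProd ε = 1 ↔ Even #{i | ε i} := by
  rw [signProd_eq_neg_one_pow, neg_one_pow_eq_one_iff_even (by decide)]

lemma signedOf_one_mem_of_pairFlip_mem (H : Subgroup (Perm (Fin m × Bool)))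
    (hH : ∀ a b, signedOf 1 (pairFlip a b) ∈ H) {ε : Fin m → Bool} (hε : signProd ε = 1) :
    signedOf 1 ε ∈ H := by
  suffices ∀ S : Finset (Fin m), Even #S → signedOf 1 (fun i => decide (i ∈ S)) ∈ H by
    simpa using this _ ((signProd_eq_one_iff_even ε).1 hε)
  intro S
  induction S using Finset.strongInduction with | H S ih => ?_
  intro hS
  rcases S.eq_empty_or_nonempty with rfl | ⟨a, ha⟩
  · simp [signedOf_one]
  obtain ⟨k, hk⟩ := hS
  obtain ⟨b, hb⟩ : (S.erase a).Nonempty := by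
    rw [← card_pos, card_erase_of_mem ha]
    have := card_pos.2 ⟨a, ha⟩
    omega
  have hsplit : signedOf 1 (fun i => decide (i ∈ S))
      = signedOf 1 (pairFlip a b) * signedOf 1 (fun i => decide (i ∈ (S.erase a).erase b)) := by
    rw [signedOf_mul]
    congr 1
    funext i
    rw [mem_erase] at hb
    by_cases hia : i = a <;> by_cases hib : i = b <;> simp_all [pairFlip]
  rw [hsplit]
  refine H.mul_mem (hH a b) (ih _ ((erase_ssubset hb).trans (erase_ssubset ha)) ⟨k - 1, ?_⟩)
  rw [card_erase_of_mem hb, card_erase_of_mem ha]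
  omega

lemma signedOf_pairFlip_mem_commutator (hm : 3 ≤ m) (a b : Fin m) :
    signedOf 1 (pairFlip a b) ∈
      ⁅evenSigned (alternatingGroup (Fin m)), evenSigned (alternatingGroup (Fin m))⁆ := by
  rcases eq_or_ne a b with rfl | hab
  · simp [pairFlip_self, signedOf_one]
  obtain ⟨c, -, hc⟩ := exists_mem_notMem_of_card_lt_card (s := {a, b}) (t := univ)
    ((card_le_two).trans_lt (by rw [card_univ, Fintype.card_fin]; omega))
  simp only [mem_insert, mem_singleton, not_or] at hc
  -- the 3-cycle `t = (a c b)` moves the pair `{a, c}` to `{c, b}`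
  set t := swap a b * swap a c
  have hta : t a = c := by simp [t, swap_apply_of_ne_of_ne hc.1 hc.2]
  have htc : t c = b := by simp [t]
  have hflip : signedOf 1 (pairFlip a c) ∈ evenSigned (alternatingGroup (Fin m)) :=
    signedOf_mem_evenSigned.2 ⟨one_mem _, signProd_pairFlip a c⟩
  have ht : signedOf t (fun _ => false) ∈ evenSigned (alternatingGroup (Fin m)) :=
    signedOf_mem_evenSigned.2 ⟨by simp [t, Perm.sign_swap hab, Perm.sign_swap (Ne.symm hc.1)],
      signProd_const_false⟩
  have := Subgroup.commutator_mem_commutator hflip ht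
  simpa only [commutatorElement_signedOf_one, pairFlip_inv_apply, hta, htc, pairFlip_xor_pairFlip]
    using this

lemma signedOf_mem_commutator_evenSigned {G : Subgroup (Perm (Fin m))} {s : Perm (Fin m)}
    (hs : s ∈ ⁅G, G⁆) : signedOf s (fun _ => false) ∈ ⁅evenSigned G, evenSigned G⁆ := by
  let f : Perm (Fin m) →* Perm (Fin m × Bool) :=
    { toFun := fun s => signedOf s fun _ => false
      map_one' := signedOf_one
      map_mul' := fun s t => by rw [signedOf_mul]; rfl }
  have hG : G.map f ≤ evenSigned G := by
    rintro _ ⟨s, hs, rfl⟩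
    exact signedOf_mem_evenSigned.2 ⟨hs, signProd_const_false⟩
  have := Subgroup.mem_map_of_mem f hs
  rw [Subgroup.map_commutator] at this
  exact Subgroup.commutator_mono hG hG this

theorem commutator_evenSigned_alternatingGroup (hm : 5 ≤ m) :
    ⁅evenSigned (alternatingGroup (Fin m)), evenSigned (alternatingGroup (Fin m))⁆
      = evenSigned (alternatingGroup (Fin m)) := by
  refine le_antisymm (Subgroup.commutator_le_self _) ?_
  rintro _ ⟨s, hs, ε, rfl, hε⟩
  have hsplit : signedOf s ε = signedOf s (fun _ => false) * signedOf 1 ε := by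
    simp [signedOf_mul]
  rw [hsplit]
  refine mul_mem (signedOf_mem_commutator_evenSigned ?_)
    (signedOf_one_mem_of_pairFlip_mem _ (signedOf_pairFlip_mem_commutator (by omega)) hε)
  rwa [commutator_alternatingGroup_eq_self (by simpa using hm)]

theorem commutator_evenSigned_top (hm : 5 ≤ m) :
    ⁅evenSigned (⊤ : Subgroup (Perm (Fin m))), evenSigned ⊤⁆
      = evenSigned (alternatingGroup (Fin m)) := by
  refine le_antisymm ((commutator_evenSigned_le ⊤).trans
    (evenSigned_mono alternatingGroup.commutator_perm_le)) ?_
  rw [← commutator_evenSigned_alternatingGroup hm]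
  exact Subgroup.commutator_mono (evenSigned_mono le_top) (evenSigned_mono le_top)

end SignedPerm

open SignedPerm in
/-- the Weyl group `W(D₅) = 2⁴·S₅` of signed permutations of `Fin 5 × Bool`
with sign product 1 has order `2⁴·5!`; its commutator subgroup has index 2 and is perfect;
consequently `W(D₅)` has exactly one subgroup of index 2. -/
theorem statement10 :
    Nat.card (evenSigned (⊤ : Subgroup (Equiv.Perm (Fin 5)))) = 2 ^ 4 * Nat.factorial 5 ∧
    (commutator (evenSigned (⊤ : Subgroup (Equiv.Perm (Fin 5))))).index = 2 ∧
    ⁅commutator (evenSigned (⊤ : Subgroup (Equiv.Perm (Fin 5)))),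
        commutator (evenSigned (⊤ : Subgroup (Equiv.Perm (Fin 5))))⁆
      = commutator (evenSigned (⊤ : Subgroup (Equiv.Perm (Fin 5)))) ∧
    ∃! H : Subgroup (evenSigned (⊤ : Subgroup (Equiv.Perm (Fin 5)))), H.index = 2 := by
  have hC : commutator (evenSigned (⊤ : Subgroup (Perm (Fin 5))))
      = (evenSigned (alternatingGroup (Fin 5))).subgroupOf (evenSigned ⊤) := by
    rw [commutator_eq_commutator_subgroupOf, commutator_evenSigned_top le_rfl]
  have hindex : (commutator (evenSigned (⊤ : Subgroup (Perm (Fin 5))))).index = 2 := by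
    rw [hC, index_evenSigned_alternatingGroup (by norm_num)]
  refine ⟨?_, hindex, ?_, existsUnique_index_eq_two_of_index_commutator hindex⟩
  · rw [card_evenSigned, card_signProd_eq_one 4, Subgroup.card_top, Nat.card_perm, Nat.card_fin,
      mul_comm]
  · rw [hC, commutator_subgroupOf_of_le (evenSigned_mono le_top),
      commutator_evenSigned_alternatingGroup le_rfl]
end

section
/- Let K be a field of characteristic 0 with algebraic closure K̄, m ≥ 2, and let h ∈ K[x] be a polynomial of degree 2m whose roots in K̄ are 2m pairwise distinct elements ±β₁,…,±βₘ. Suppose that the image of Gal(K̄/K) in Perm({±β₁,…,±βₘ}) contains, for some transitive subgroup G ≤ Perm(Fin m), every permutation of the form βᵢ ↦ εᵢ β_{s(i)}, −βᵢ ↦ −εᵢ β_{s(i)} with s ∈ G, εᵢ ∈ {±1}, ∏ᵢεᵢ = 1. Then h is irreducible in K[x]. -/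
open Equiv Finset

open SignedPerm in
/-- if the roots of `h` in `K̄` are the `2m` pairwise distinct elements `±βᵢ`
and the image of `Gal(K̄/K)` in the permutation group of the roots contains all even-signed
permutations coming from a transitive subgroup `G ≤ Perm(Fin m)`, then `h` is irreducible
over `K`. -/
theorem statement11 (K : Type*) [Field K] [CharZero K] (m : ℕ) (hm : 2 ≤ m)
    (Kbar : Type*) [Field Kbar] [Algebra K Kbar] [IsAlgClosure K Kbar]
    (h : Polynomial K) (hdeg : h.natDegree = 2 * m)
    (β : Fin m → Kbar)
    (hroots : ∀ x : Kbar, Polynomial.aeval x h = 0 ↔ ∃ i, x = β i ∨ x = -β i)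
    (hinj : Function.Injective β) (hne : ∀ i j, β i ≠ -β j)
    (G : Subgroup (Equiv.Perm (Fin m)))
    (htrans : ∀ i j : Fin m, ∃ g ∈ G, g i = j)
    (hgal : ∀ s ∈ G, ∀ ε : Fin m → Bool, signProd ε = 1 →
        ∃ σ : Kbar ≃ₐ[K] Kbar, ∀ i, σ (β i) = (if ε i then -1 else 1) * β (s i)) :
    Irreducible h := by
  classical
  have hm0 : 0 < m := by omega
  have hm1 : 1 < m := by omega
  set i0 : Fin m := ⟨0, hm0⟩
  set i1 : Fin m := ⟨1, hm1⟩
  have hi01 : i0 ≠ i1 := by simp [i0, i1, Fin.ext_iff]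
  set β0 : Kbar := β i0 with hβ0
  have hθ : Polynomial.aeval β0 h = 0 := (hroots β0).2 ⟨i0, Or.inl rfl⟩
  have hne0 : h ≠ 0 := by
    intro hh; rw [hh] at hdeg; simp at hdeg; omega
  have halg : Algebra.IsAlgebraic K Kbar := IsAlgClosure.isAlgebraic
  have hint : IsIntegral K β0 := (halg.isAlgebraic β0).isIntegral
  have hdvd : minpoly K β0 ∣ h := minpoly.dvd K β0 hθ
  have hmin0 : minpoly K β0 ≠ 0 := minpoly.ne_zero hint
  -- every root of h is a root of the minimal polynomial
  have key : ∀ j : Fin m,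
      Polynomial.aeval (β j) (minpoly K β0) = 0 ∧
      Polynomial.aeval (-β j) (minpoly K β0) = 0 := by
    intro j
    obtain ⟨s, hs, hsj⟩ := htrans i0 j
    constructor
    · obtain ⟨σ, hσ⟩ := hgal s hs (fun _ => false) signProd_const_false
      have h1 : σ β0 = β j := by simpa [hsj] using hσ i0
      have := Polynomial.aeval_algHom_apply (σ : Kbar →ₐ[K] Kbar) β0 (minpoly K β0)
      rw [minpoly.aeval, map_zero] at this
      rw [← h1]; simpa using this
    · set δ : Fin m → Fin m → Bool := fun a i => decide (i = a) with hδ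
      have hsp : ∀ a, signProd (δ a) = -1 := by
        intro a
        simp [signProd, δ, Finset.prod_ite_eq']
      set ε : Fin m → Bool := fun i => xor (δ i0 i) (δ i1 i) with hε
      have hspε : signProd ε = 1 := by
        rw [hε, signProd_xor, hsp, hsp]; rfl
      obtain ⟨σ, hσ⟩ := hgal s hs ε hspε
      have hεi0 : ε i0 = true := by simp [ε, δ, hi01]
      have h1 : σ β0 = -β j := by
        have := hσ i0
        rw [hεi0, hsj] at this
        simpa using this
      have := Polynomial.aeval_algHom_apply (σ : Kbar →ₐ[K] Kbar) β0 (minpoly K β0)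
      rw [minpoly.aeval, map_zero] at this
      rw [← h1]; simpa using this
  -- the set of roots
  set S : Finset Kbar := Finset.univ.image β ∪ Finset.univ.image (fun i => -β i) with hS
  have hScard : S.card = 2 * m := by
    rw [hS, Finset.card_union_of_disjoint, Finset.card_image_of_injective _ hinj,
      Finset.card_image_of_injective _ (fun a b hab => hinj (neg_injective hab))]
    · simp; ring
    · rw [Finset.disjoint_left]
      rintro x hx hx'
      simp only [Finset.mem_image, Finset.mem_univ, true_and] at hx hx'
      obtain ⟨i, rfl⟩ := hx
      obtain ⟨j, hj⟩ := hx'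
      exact hne i j hj.symm
  have hSsub : S ⊆ ((minpoly K β0).aroots Kbar).toFinset := by
    intro x hx
    rw [Multiset.mem_toFinset, Polynomial.mem_aroots]
    refine ⟨hmin0, ?_⟩
    simp only [hS, Finset.mem_union, Finset.mem_image, Finset.mem_univ, true_and] at hx
    rcases hx with ⟨i, rfl⟩ | ⟨i, rfl⟩
    · exact (key i).1
    · exact (key i).2
  have hdegmin : 2 * m ≤ (minpoly K β0).natDegree := by
    calc 2 * m = S.card := hScard.symm
      _ ≤ ((minpoly K β0).aroots Kbar).toFinset.card := Finset.card_le_card hSsub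
      _ ≤ Multiset.card ((minpoly K β0).aroots Kbar) := Multiset.toFinset_card_le _
      _ ≤ ((minpoly K β0).map (algebraMap K Kbar)).natDegree := Polynomial.card_roots' _
      _ = (minpoly K β0).natDegree := Polynomial.natDegree_map _
  have hdegle : (minpoly K β0).natDegree ≤ h.natDegree :=
    Polynomial.natDegree_le_of_dvd hdvd hne0
  obtain ⟨c, hc⟩ := hdvd
  have hc0 : c ≠ 0 := by
    intro hc0; rw [hc0, mul_zero] at hc; exact hne0 hc
  have hcdeg : c.natDegree = 0 := by
    have := Polynomial.natDegree_mul hmin0 hc0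
    rw [← hc, hdeg] at this
    omega
  have hcu : IsUnit c := by
    rw [Polynomial.eq_C_of_natDegree_eq_zero hcdeg]
    refine Polynomial.isUnit_C.2 (IsUnit.mk0 _ ?_)
    intro h'
    apply hc0
    rw [Polynomial.eq_C_of_natDegree_eq_zero hcdeg, h', map_zero]
  have hassoc : Associated (minpoly K β0) h := ⟨hcu.unit, by rw [IsUnit.unit_spec]; exact hc.symm⟩
  exact hassoc.irreducible (minpoly.irreducible hint)
end
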